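/- Let μ ∈ M(ℝ) be a finite signed Borel measure with Jordan decomposition μ = μ⁺ − μ⁻ and ‖μ⁻‖ < 1, and set A = 1/(1 + ‖μ⁺‖ − ‖μ⁻‖). Let c ≥ 0 and let u ∈ C²(ℝ) ∩ L^∞(ℝ) be a solution of i·c·u′ + u′′ + u·(W ∗ (1 − |u|²)) = 0 with W = A·(δ₀ + μ). If v = |u|² attains its supremum M at a point x₀ with v″(x₀) ≤ 0 and (W ∗ v)(x₀) ≤ 1 + c²/4, then M ≤ (1 + ‖μ⁺‖/(1 − ‖μ⁻‖))·(1 + c²/4). -/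

import Mathlib

open MeasureTheory

/-- Integration against a finite signed measure via Jordan decomposition. -/
noncomputable def signedIntegral (μ : MeasureTheory.SignedMeasure ℝ) (f : ℝ → ℝ) : ℝ :=
  (∫ y, f y ∂μ.toJordanDecomposition.posPart) - ∫ y, f y ∂μ.toJordanDecomposition.negPart

/-- Convolution `(μ ∗ f)(x) = ∫ f(x − y) dμ(y)`. -/
noncomputable def signedConv (μ : MeasureTheory.SignedMeasure ℝ) (f : ℝ → ℝ) (x : ℝ) : ℝ :=
  signedIntegral μ (fun y => f (x - y))

/-! At the maximum point `x₀` the positive part of `μ` can only increase `(μ ∗ v)(x₀)`, while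
the negative part lowers it by at most `‖μ⁻‖ M`, because `0 ≤ v ≤ M`. Hence
`1 + c²/4 ≥ A (M + (μ ∗ v)(x₀)) ≥ A M (1 - ‖μ⁻‖)`, and dividing by `A (1 - ‖μ⁻‖) > 0` gives the
bound. -/

theorem neg_mul_negPart_le_signedIntegral (μ : SignedMeasure ℝ) {f : ℝ → ℝ} {M : ℝ}
    (hf₀ : ∀ y, 0 ≤ f y) (hfM : ∀ y, f y ≤ M) :
    -(M * (μ.toJordanDecomposition.negPart Set.univ).toReal) ≤ signedIntegral μ f := by
  have hpos : 0 ≤ ∫ y, f y ∂μ.toJordanDecomposition.posPart := integral_nonneg hf₀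
  have hneg : ∫ y, f y ∂μ.toJordanDecomposition.negPart
      ≤ M * (μ.toJordanDecomposition.negPart Set.univ).toReal := by
    refine (Real.le_norm_self _).trans (norm_integral_le_of_norm_le_const ?_)
    exact Filter.Eventually.of_forall fun y => by
      rw [Real.norm_eq_abs, abs_of_nonneg (hf₀ y)]; exact hfM y
  unfold signedIntegral
  linarith

theorem neg_mul_negPart_le_signedConv (μ : SignedMeasure ℝ) {f : ℝ → ℝ} {M : ℝ}
    (hf₀ : ∀ y, 0 ≤ f y) (hfM : ∀ y, f y ≤ M) (x : ℝ) :
    -(M * (μ.toJordanDecomposition.negPart Set.univ).toReal) ≤ signedConv μ f x :=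
  neg_mul_negPart_le_signedIntegral μ (fun y => hf₀ (x - y)) fun y => hfM (x - y)

theorem le_one_add_div_mul_of_mul_div_le {p n M K : ℝ} (hp : 0 ≤ p) (hn : n < 1)
    (h : M * (1 - n) / (1 + p - n) ≤ K) : M ≤ (1 + p / (1 - n)) * K := by
  have hn' : 0 < 1 - n := by linarith
  have hpn : 0 < 1 + p - n := by linarith
  calc M = M * (1 - n) / (1 + p - n) * ((1 + p - n) / (1 - n)) := by field_simp
    _ ≤ K * ((1 + p - n) / (1 - n)) := by gcongr
    _ = (1 + p / (1 - n)) * K := by field_simp; ring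

theorem Linfty_bound_delta_mu_potential_general (c : ℝ)
    (μ : MeasureTheory.SignedMeasure ℝ)
    (nP nN : ℝ)
    (hnP : nP = (μ.toJordanDecomposition.posPart Set.univ).toReal)
    (hnN : nN = (μ.toJordanDecomposition.negPart Set.univ).toReal)
    (hN1 : nN < 1)
    (A : ℝ) (hA : A = 1 / (1 + nP - nN))
    (u : ℝ → ℂ)
    (v : ℝ → ℝ) (hv : ∀ x, v x = (‖u x‖) ^ 2)
    (M : ℝ) (x₀ : ℝ) (hsup : ∀ x, v x ≤ M) (hattain : v x₀ = M)
    (hW : A * (v x₀ + signedConv μ v x₀) ≤ 1 + c ^ 2 / 4) :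
    M ≤ (1 + nP / (1 - nN)) * (1 + c ^ 2 / 4) := by
  have hv₀ : ∀ x, 0 ≤ v x := fun x => (hv x).symm ▸ sq_nonneg _
  have hconv : -(M * nN) ≤ signedConv μ v x₀ :=
    hnN ▸ neg_mul_negPart_le_signedConv μ hv₀ hsup x₀
  have hnP₀ : 0 ≤ nP := hnP ▸ ENNReal.toReal_nonneg
  have hA₀ : 0 ≤ A := by rw [hA]; exact one_div_nonneg.mpr (by linarith)
  refine le_one_add_div_mul_of_mul_div_le hnP₀ hN1 ?_
  calc M * (1 - nN) / (1 + nP - nN) = A * (M - M * nN) := by rw [hA]; ring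
    _ ≤ A * (v x₀ + signedConv μ v x₀) := by rw [hattain]; gcongr; linarith
    _ ≤ 1 + c ^ 2 / 4 := hW

/-- Let `μ` be a finite signed measure with Jordan decomposition `μ = μ⁺ − μ⁻`,
`‖μ⁻‖ < 1`, and `A = 1/(1 + ‖μ⁺‖ − ‖μ⁻‖)`. If `u ∈ C²(ℝ) ∩ L^∞(ℝ)` solves
`i·c·u′ + u″ + u·(W ∗ (1 − |u|²)) = 0` with `W = A·(δ₀ + μ)`, and `v = |u|²`
attains its supremum `M` at `x₀` with `v″(x₀) ≤ 0` and `(W∗v)(x₀) ≤ 1 + c²/4`,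
then `M ≤ (1 + ‖μ⁺‖/(1 − ‖μ⁻‖))·(1 + c²/4)`. -/
theorem Linfty_bound_delta_mu_potential (c : ℝ) (hc : 0 ≤ c)
    (μ : MeasureTheory.SignedMeasure ℝ)
    (nP nN : ℝ)
    (hnP : nP = (μ.toJordanDecomposition.posPart Set.univ).toReal)
    (hnN : nN = (μ.toJordanDecomposition.negPart Set.univ).toReal)
    (hN1 : nN < 1)
    (A : ℝ) (hA : A = 1 / (1 + nP - nN))
    (u : ℝ → ℂ) (hu : ContDiff ℝ 2 u) (hubd : ∃ C : ℝ, ∀ x, ‖u x‖ ≤ C)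
    (heq : ∀ x : ℝ,
      Complex.I * (c : ℂ) * deriv u x + deriv (deriv u) x
        + u x * ((A * ((1 - (‖u x‖) ^ 2)
            + signedConv μ (fun y => 1 - (‖u y‖) ^ 2) x) : ℝ) : ℂ) = 0)
    (v : ℝ → ℝ) (hv : ∀ x, v x = (‖u x‖) ^ 2)
    (M : ℝ) (x₀ : ℝ) (hsup : ∀ x, v x ≤ M) (hattain : v x₀ = M)
    (hconc : deriv (deriv v) x₀ ≤ 0)
    (hW : A * (v x₀ + signedConv μ v x₀) ≤ 1 + c ^ 2 / 4) :
    M ≤ (1 + nP / (1 - nN)) * (1 + c ^ 2 / 4) :=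
  Linfty_bound_delta_mu_potential_general c μ nP nN hnP hnN hN1 A hA u v hv M x₀ hsup hattain hW
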